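/- In the partition algebra, π(A) = A · ∏_{τ transposition with ⟨τ⟩ not ≤ A} (e − ⟨τ⟩), where the product ranges over transpositions τ whose corresponding two-element-block partition is not a refinement of A, and e denotes the discrete partition (the algebra unit). -/

import Mathlib

/- The partition algebra: the free ℚ-algebra on the commutative monoid of
partitions of `{1,…,n}` (setoids on `Fin n`) under join, with unit the
discrete partition `⊥`. -/

def PartM (n : ℕ) := Setoid (Fin n)

instance (n : ℕ) : CommMonoid (PartM n) where
  mul a b := ((a : Setoid (Fin n)) ⊔ (b : Setoid (Fin n)) : Setoid (Fin n))
  one := (⊥ : Setoid (Fin n))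
  mul_assoc a b c := sup_assoc (α := Setoid (Fin n)) a b c
  one_mul a := bot_sup_eq (α := Setoid (Fin n)) a
  mul_one a := sup_bot_eq (α := Setoid (Fin n)) a
  mul_comm a b := sup_comm (α := Setoid (Fin n)) a b

/-- The basis element of the partition algebra corresponding to a partition. -/
noncomputable def partBasis (n : ℕ) (A : Setoid (Fin n)) : MonoidAlgebra ℚ (PartM n) :=
  MonoidAlgebra.of ℚ (PartM n) A

/- `π(A) = ∏_{B : ¬ B ≤ A} (A − A·B)`, with `π` of the trivial partition `⊤`
set to be `⊤` itself. -/

open scoped Classical in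
noncomputable def piOp (n : ℕ) (A : Setoid (Fin n)) : MonoidAlgebra ℚ (PartM n) :=
  if A = ⊤ then partBasis n A
  else ∏ᶠ (B : Setoid (Fin n)) (_ : ¬ B ≤ A), (partBasis n A - partBasis n (A ⊔ B))
/-- The partition with the single nontrivial block `{i,j}`, identified with the
transposition `(i,j)`. -/
def transPart (n : ℕ) (i j : Fin n) : Setoid (Fin n) :=
  Relation.EqvGen.setoid (fun x y => x = i ∧ y = j)


/-!
Since `A − A·B = A·(e − B)` and `A` is idempotent, `π(A) = A · ∏_{B ≰ A} (e − B)`.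
If `T ≤ B` then `T·B = B`, so `(e − T)(e − B) = e − T`. Every `B ≰ A` merges two elements
`i ≠ j` not merged by `A`, hence lies above the transposition `(i,j)`, which is itself `≰ A`;
so all factors other than those of transpositions are absorbed.
-/

open scoped Classical

theorem Finset.prod_eq_prod_of_subset_of_absorbed {ι M : Type*} [CommMonoid M] {s t : Finset ι}
    (f : ι → M) (hts : t ⊆ s) (habs : ∀ b ∈ s \ t, ∃ a ∈ t, f a * f b = f a) :
    ∏ i ∈ s, f i = ∏ i ∈ t, f i := by
  rw [← Finset.prod_sdiff hts]
  refine Finset.prod_induction f (· * ∏ i ∈ t, f i = ∏ i ∈ t, f i)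
    (fun x y hx hy => by rw [mul_assoc, hy, hx]) (one_mul _) fun b hb => ?_
  obtain ⟨a, ha, hab⟩ := habs b hb
  rw [← Finset.mul_prod_erase t f ha, ← mul_assoc, mul_comm (f b), hab]

instance Setoid.finite {α : Type*} [Finite α] : Finite (Setoid α) :=
  Finite.of_injective (fun s : Setoid α => s.r) fun _ _ h =>
    Setoid.ext fun x y => iff_of_eq (congrFun (congrFun h x) y)

noncomputable instance {α : Type*} [Finite α] : Fintype (Setoid α) := Fintype.ofFinite _

section PartitionAlgebra

variable {n : ℕ}

theorem partBasis_mul (A B : Setoid (Fin n)) :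
    partBasis n A * partBasis n B = partBasis n (A ⊔ B) :=
  (map_mul (MonoidAlgebra.of ℚ (PartM n)) (show PartM n from A) (show PartM n from B)).symm

theorem isIdempotentElem_partBasis (A : Setoid (Fin n)) : IsIdempotentElem (partBasis n A) := by
  rw [IsIdempotentElem, partBasis_mul, sup_idem]

theorem partBasis_sub_partBasis_sup (A B : Setoid (Fin n)) :
    partBasis n A - partBasis n (A ⊔ B) = partBasis n A * (1 - partBasis n B) := by
  rw [mul_sub, mul_one, partBasis_mul]

theorem one_sub_partBasis_mul_of_le {T B : Setoid (Fin n)} (h : T ≤ B) :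
    (1 - partBasis n T) * (1 - partBasis n B) = 1 - partBasis n T := by
  have hTB : partBasis n T * partBasis n B = partBasis n B := by
    rw [partBasis_mul, sup_eq_right.mpr h]
  linear_combination hTB

theorem transPart_le_iff {i j : Fin n} {B : Setoid (Fin n)} : transPart n i j ≤ B ↔ B i j :=
  ⟨fun h => h (Relation.EqvGen.rel i j ⟨rfl, rfl⟩),
    fun h => Setoid.eqvGen_le fun _ _ ⟨hx, hy⟩ => hx ▸ hy ▸ h⟩

theorem exists_transPart_le_of_not_le {A B : Setoid (Fin n)} (h : ¬ B ≤ A) :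
    ∃ i j : Fin n, i ≠ j ∧ transPart n i j ≤ B ∧ ¬ transPart n i j ≤ A := by
  obtain ⟨i, j, hB, hA⟩ : ∃ i j, B i j ∧ ¬ A i j := by
    simpa [Setoid.le_def] using h
  exact ⟨i, j, fun hij => hA (hij ▸ A.refl i), transPart_le_iff.mpr hB,
    fun hle => hA (transPart_le_iff.mp hle)⟩

end PartitionAlgebra

theorem piOp_eq_mul_prod_transpositions {n : ℕ} (A : Setoid (Fin n)) :
    piOp n A = partBasis n A *
      ∏ᶠ (T : Setoid (Fin n))
        (_ : (∃ i j : Fin n, i ≠ j ∧ T = transPart n i j) ∧ ¬ T ≤ A),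
        ((1 : MonoidAlgebra ℚ (PartM n)) - partBasis n T) := by
  set transpositions := Finset.univ.filter
    fun T : Setoid (Fin n) => (∃ i j : Fin n, i ≠ j ∧ T = transPart n i j) ∧ ¬ T ≤ A
  set nonRefining := Finset.univ.filter fun B : Setoid (Fin n) => ¬ B ≤ A
  rw [finprod_cond_eq_prod_of_cond_iff _ (t := transpositions) (by simp [transpositions])]
  by_cases hA : A = ⊤
  · have : transpositions = ∅ := by simp [transpositions, hA]
    rw [piOp, if_pos hA, this, Finset.prod_empty, mul_one]
  rw [piOp, if_neg hA,
    finprod_cond_eq_prod_of_cond_iff _ (t := nonRefining) (by simp [nonRefining])]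
  have hcard : nonRefining.card ≠ 0 :=
    Finset.card_ne_zero_of_mem (a := ⊤) (by simp [nonRefining, hA])
  obtain ⟨k, hk⟩ := Nat.exists_eq_succ_of_ne_zero hcard
  simp_rw [partBasis_sub_partBasis_sup, Finset.prod_mul_distrib, Finset.prod_const, hk,
    (isIdempotentElem_partBasis A).pow_succ_eq]
  congr 1
  refine Finset.prod_eq_prod_of_subset_of_absorbed _
    (fun T hT => by simp_all [transpositions, nonRefining]) fun B hB => ?_
  obtain ⟨i, j, hij, hiB, hiA⟩ :=
    exists_transPart_le_of_not_le (by simpa [nonRefining] using (Finset.mem_sdiff.mp hB).1)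
  exact ⟨_, by simpa [transpositions] using ⟨⟨i, j, hij, rfl⟩, hiA⟩,
    one_sub_partBasis_mul_of_le hiB⟩
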